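/- arXiv:2303.07753 — 2 statements merged into one kernel-verified Lean document; each statement's English description precedes it below -/
import Mathlib

section
/- Let $\mathcal{C}$ be an abelian category with enough injectives and $X$ an exact, locally nilpotent endofunctor preserving injectives. Then every injective object of the exact category $\operatorname{Mono}(X)$ is isomorphic to $f_!(J)$ for some injective $J \in \mathcal{C}$, and conversely every such $f_!(J)$ is injective in $\operatorname{Mono}(X)$. Moreover $\operatorname{Mono}(X)$ has enough injectives: every object admits an inflation into some $f_!(I)$ with $I$ injective in $\mathcal{C}$. -/
open CategoryTheory Limits

universe v u

variable {C : Type u} [Category.{v} C]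

/-- The power `X^n` of an endofunctor, with `X^(n+1) = X^n ⋙ X`. -/
def fpow (X : C ⥤ C) : ℕ → (C ⥤ C)
  | 0 => 𝟭 C
  | n + 1 => fpow X n ⋙ X

/-- `X` is locally nilpotent if every object is annihilated by some power of `X`. -/
def LocallyNilpotent (X : C ⥤ C) : Prop :=
  ∀ M : C, ∃ n : ℕ, IsZero ((fpow X n).obj M)

/-- The category `(X ⇓ Id)` of `X`-modules, identified with the Eilenberg–Moore category
of the free monad on `X`. -/
structure XMod (X : C ⥤ C) : Type max u v where
  carrier : C
  str : X.obj carrier ⟶ carrier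

/-- Morphisms of `X`-modules. -/
@[ext]
structure XModHom {X : C ⥤ C} (M N : XMod X) : Type v where
  hom : M.carrier ⟶ N.carrier
  comm : M.str ≫ hom = X.map hom ≫ N.str

instance (X : C ⥤ C) : Category (XMod X) where
  Hom := XModHom
  id M := ⟨𝟙 M.carrier, by simp⟩
  comp f g := ⟨f.hom ≫ g.hom, by
    rw [← Category.assoc, f.comm, Category.assoc, g.comm, ← Category.assoc, ← Functor.map_comp]⟩
  id_comp f := by apply XModHom.ext; simp [CategoryStruct.id, CategoryStruct.comp]
  comp_id f := by apply XModHom.ext; simp [CategoryStruct.id, CategoryStruct.comp]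
  assoc f g h := by apply XModHom.ext; simp [CategoryStruct.comp]

@[simp] lemma XMod.id_hom {X : C ⥤ C} (M : XMod X) : (𝟙 M : XModHom M M).hom = 𝟙 M.carrier := rfl
@[simp] lemma XMod.comp_hom {X : C ⥤ C} {M N P : XMod X} (f : M ⟶ N) (g : N ⟶ P) :
    (f ≫ g).hom = f.hom ≫ g.hom := rfl

/-- `F` is the free `X`-module `f₁(N)` on `N`, encoded via the universal
property of the free–forgetful adjunction `f₁ ⊣ f⋆`. -/
structure IsFreeXModOn (X : C ⥤ C) (F : XMod X) (N : C) where
  unit : N ⟶ F.carrier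
  lift : ∀ (P : XMod X), (N ⟶ P.carrier) → (F ⟶ P)
  fac : ∀ (P : XMod X) (g : N ⟶ P.carrier), unit ≫ (lift P g).hom = g
  uniq : ∀ (P : XMod X) (g : N ⟶ P.carrier) (k : F ⟶ P), unit ≫ k.hom = g → k = lift P g

variable [Abelian C] {X : C ⥤ C}

/-- A conflation in `Mono(X)`: a kernel-cokernel pair (detected on underlying objects). -/
def IsConf {A B D : XMod X} (f : A ⟶ B) (g : B ⟶ D) : Prop :=
  Mono f.hom ∧ Epi g.hom ∧
    ∃ w : f.hom ≫ g.hom = 0, (ShortComplex.mk f.hom g.hom w).Exact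

/-- An inflation in the exact category `Mono(X)`: a monomorphism whose cokernel again lies
in `Mono(X)`. -/
def IsInflationMono {A B : XMod X} (f : A ⟶ B) : Prop :=
  ∃ (D : XMod X) (g : B ⟶ D), Mono D.str ∧ IsConf f g

/-- Injectivity in the exact category `Mono(X)`. -/
def IsInjMonoX (I : XMod X) : Prop :=
  Mono I.str ∧ ∀ (A B : XMod X) (f : A ⟶ B), Mono A.str → Mono B.str →
    IsInflationMono f → ∀ g : A ⟶ I, ∃ h : B ⟶ I, f ≫ h = g

/-!
Once `X^n J = 0`, the free module `f₁(J)` is `J ⊕ XJ ⊕ ⋯ ⊕ X^n J` with the shift as structure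
map. Module maps `B ⟶ f₁(J)` are families `B → X^i J` compatible with the structure maps, and
when every `X^i J` is injective such families extend along inflations; so `f₁(J)` is injective
in `Mono(X)` for injective `J`, and any `M ∈ Mono(X)` maps to `f₁(J)` inducing a prescribed
`top M := coker M.str ⟶ J`.

Local nilpotency gives a Nakayama lemma: a module whose structure map is epi vanishes. Hence a
module map that is epi on tops is epi, and one that is mono on tops is an inflation. Taking `J`
an injective hull of `top M` gives enough injectives. If `M` is injective, such an inflation
splits, so `top M` is a retract of `top f₁(J) ≅ J` and is injective; then the map
`M ⟶ f₁(top M)` inducing the identity on tops is an isomorphism.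
-/

-- Identifies `(fpow X (i + 1)).obj J` with `X.obj ((fpow X i).obj J)` for instances and `simp`.
attribute [reducible] fpow

omit [Abelian C] in
lemma injective_fpow_obj (hXinj : ∀ I : C, Injective I → Injective (X.obj I)) {J : C}
    (hJ : Injective J) : ∀ n, Injective ((fpow X n).obj J)
  | 0 => hJ
  | n + 1 => hXinj _ (injective_fpow_obj hXinj hJ n)

namespace XMod

def isoMk {M N : XMod X} (e : M.carrier ≅ N.carrier) (comm : M.str ≫ e.hom = X.map e.hom ≫ N.str) :
    M ≅ N where
  hom := ⟨e.hom, comm⟩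
  inv := ⟨e.inv, by
    rw [← cancel_mono e.hom, Category.assoc, Category.assoc, e.inv_hom_id, Category.comp_id, comm,
      ← Category.assoc, ← X.map_comp, e.inv_hom_id, X.map_id, Category.id_comp]⟩
  hom_inv_id := XModHom.ext e.hom_inv_id
  inv_hom_id := XModHom.ext e.inv_hom_id

omit [Abelian C] in
@[simp]
lemma hom_inv_id_hom {M N : XMod X} (e : M ≅ N) : e.hom.hom ≫ e.inv.hom = 𝟙 _ := by
  rw [← comp_hom, e.hom_inv_id, id_hom]

omit [Abelian C] in
@[simp]
lemma inv_hom_id_hom {M N : XMod X} (e : M ≅ N) : e.inv.hom ≫ e.hom.hom = 𝟙 _ := by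
  rw [← comp_hom, e.inv_hom_id, id_hom]

@[simp]
def act (M : XMod X) : ∀ i, (fpow X i).obj M.carrier ⟶ M.carrier
  | 0 => 𝟙 _
  | i + 1 => X.map (act M i) ≫ M.str

lemma isZero_carrier_of_epi_str [X.PreservesEpimorphisms] (hX : LocallyNilpotent X) (M : XMod X)
    [Epi M.str] : IsZero M.carrier := by
  have act_epi : ∀ i, Epi (M.act i) := by
    intro i
    induction i with
    | zero => exact inferInstanceAs (Epi (𝟙 M.carrier))
    | succ i ih => exact @epi_comp _ _ _ _ _ _ (X.map_epi (M.act i)) _ _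
  obtain ⟨k, hk⟩ := hX M.carrier
  rw [IsZero.iff_id_eq_zero, ← cancel_epi (M.act k)]
  exact hk.eq_of_src _ _

variable (X) in
noncomputable abbrev top : XMod X ⥤ C where
  obj M := cokernel M.str
  map a := cokernel.map _ _ (X.map a.hom) a.hom a.comm
  map_id M := by ext; simp
  map_comp a b := by ext; simp

@[simp]
lemma π_top_map {M N : XMod X} (a : M ⟶ N) :
    cokernel.π M.str ≫ (top X).map a = a.hom ≫ cokernel.π N.str :=
  cokernel.π_desc _ _ _

variable [PreservesFiniteColimits X] {M N : XMod X}

noncomputable abbrev coker (a : M ⟶ N) : XMod X where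
  carrier := cokernel a.hom
  str := (PreservesCokernel.iso X a.hom).hom ≫ cokernel.map _ _ M.str N.str a.comm.symm

noncomputable def coker.π (a : M ⟶ N) : N ⟶ coker a :=
  ⟨cokernel.π a.hom, by simp [coker]⟩

lemma epi_hom_of_epi_top_map (hX : LocallyNilpotent X) (a : M ⟶ N) [Epi ((top X).map a)] :
    Epi a.hom := by
  set D := coker a
  have top_π_zero : (top X).map (coker.π a) = 0 := by
    apply (cancel_epi ((top X).map a)).1
    rw [comp_zero, ← Functor.map_comp]
    apply (cancel_epi (cokernel.π M.str)).1
    rw [π_top_map, comp_zero]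
    show (a.hom ≫ cokernel.π a.hom) ≫ _ = 0
    rw [cokernel.condition, zero_comp]
  have : cokernel.π D.str = 0 := by
    apply (cancel_epi (cokernel.π a.hom)).1
    rw [comp_zero]
    exact (π_top_map (coker.π a)).symm.trans (by rw [top_π_zero, comp_zero])
  have := Abelian.epi_of_cokernel_π_eq_zero _ this
  exact Preadditive.epi_of_isZero_cokernel _ (isZero_carrier_of_epi_str hX D)

-- The kernel `K` of `a` lies in the image of `M.str` (as `top a` is mono), and since `N.str` is
-- mono, `X K` maps onto it: `K.str` is split epi, so `K = 0`.
lemma mono_hom_of_mono_top_map [PreservesFiniteLimits X] (hX : LocallyNilpotent X) (a : M ⟶ N)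
    [Mono M.str] [Mono N.str] [Mono ((top X).map a)] : Mono a.hom := by
  set k := kernel.ι a.hom
  let K : XMod X := ⟨kernel a.hom, kernel.lift _ (X.map k ≫ M.str) (by
    rw [Category.assoc, a.comm, ← X.map_comp_assoc, kernel.condition, X.map_zero, zero_comp])⟩
  have k_π : k ≫ cokernel.π M.str = 0 := by
    apply (cancel_mono ((top X).map a)).1
    rw [Category.assoc, π_top_map, kernel.condition_assoc, zero_comp, zero_comp]
  set u := Abelian.monoLift M.str k k_π
  have u_str : u ≫ M.str = k := Abelian.monoLift_comp _ _ _
  have u_map : u ≫ X.map a.hom = 0 := by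
    rw [← cancel_mono N.str, Category.assoc, ← a.comm, reassoc_of% u_str, kernel.condition,
      zero_comp]
  set v := kernel.lift _ u u_map ≫ (PreservesKernel.iso X a.hom).inv
  have v_map : v ≫ X.map k = u := by simp [v, k]
  have : Epi K.str := by
    refine @IsSplitEpi.epi _ _ _ _ _ ⟨⟨v, ?_⟩⟩
    rw [← cancel_mono k, Category.assoc, kernel.lift_ι, reassoc_of% v_map, u_str,
      Category.id_comp]
  exact Preadditive.mono_of_isZero_kernel _ (isZero_carrier_of_epi_str hX K)

open scoped Pseudoelement in
open Abelian.Pseudoelement in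
lemma mono_coker_str (a : M ⟶ N) [Mono N.str] [Mono ((top X).map a)] : Mono (coker a).str := by
  apply mono_of_zero_of_map_zero
  intro d hd
  have π_comm : N.str ≫ cokernel.π a.hom = X.map (cokernel.π a.hom) ≫ (coker a).str :=
    (coker.π a).comm
  obtain ⟨y, rfl⟩ := pseudo_surjective_of_epi (X.map (cokernel.π a.hom)) d
  have hy : cokernel.π a.hom (N.str y) = 0 := by
    rw [← Abelian.Pseudoelement.comp_apply, π_comm, Abelian.Pseudoelement.comp_apply, hd]
  obtain ⟨m, hm : a.hom m = N.str y⟩ := pseudo_exact_of_exact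
    ((ShortComplex.mk _ _ (cokernel.condition a.hom)).exact_of_g_is_cokernel
      (cokernelIsCokernel _)) _ hy
  have hm' : cokernel.π M.str m = 0 := by
    refine zero_of_map_zero ((top X).map a) (pseudo_injective_of_mono _) _ ?_
    rw [← Abelian.Pseudoelement.comp_apply, π_top_map, Abelian.Pseudoelement.comp_apply, hm,
      ← Abelian.Pseudoelement.comp_apply, cokernel.condition, Abelian.Pseudoelement.zero_apply]
  obtain ⟨x, hx : M.str x = m⟩ := pseudo_exact_of_exact
    ((ShortComplex.mk _ _ (cokernel.condition M.str)).exact_of_g_is_cokernel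
      (cokernelIsCokernel _)) _ hm'
  have hxy : X.map a.hom x = y := by
    apply pseudo_injective_of_mono N.str
    rw [← Abelian.Pseudoelement.comp_apply, ← a.comm, Abelian.Pseudoelement.comp_apply, hx, hm]
  rw [← hxy, ← Abelian.Pseudoelement.comp_apply, ← X.map_comp, cokernel.condition, X.map_zero,
    Abelian.Pseudoelement.zero_apply]

lemma isInflationMono_of_mono_top_map [PreservesFiniteLimits X] (hX : LocallyNilpotent X)
    (a : M ⟶ N) [Mono M.str] [Mono N.str] [Mono ((top X).map a)] : IsInflationMono a :=
  have := mono_hom_of_mono_top_map hX a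
  ⟨coker a, coker.π a, mono_coker_str a, this, coequalizer.π_epi, cokernel.condition _,
    ShortComplex.exact_of_g_is_cokernel _ (cokernelIsCokernel _)⟩

end XMod

def IsFreeXModOn.ofIso {F F' : XMod X} {J : C} (hF : IsFreeXModOn X F J) (e : F ≅ F') :
    IsFreeXModOn X F' J where
  unit := hF.unit ≫ e.hom.hom
  lift P g := e.inv ≫ hF.lift P g
  fac P g := by rw [XMod.comp_hom, Category.assoc, ← Category.assoc e.hom.hom, XMod.hom_inv_id_hom,
    Category.id_comp, hF.fac]
  uniq P g k hk := by
    rw [← hF.uniq P g (e.hom ≫ k) (by simpa using hk), Iso.inv_hom_id_assoc]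

def IsFreeXModOn.iso {F F' : XMod X} {J : C} (hF : IsFreeXModOn X F J)
    (hF' : IsFreeXModOn X F' J) : F ≅ F' where
  hom := hF.lift F' hF'.unit
  inv := hF'.lift F hF.unit
  hom_inv_id := (hF.uniq F hF.unit _ (by
      rw [XMod.comp_hom, reassoc_of% (hF.fac F' hF'.unit), hF'.fac])).trans
    (hF.uniq F hF.unit (𝟙 F) (by simp)).symm
  inv_hom_id := (hF'.uniq F' hF'.unit _ (by
      rw [XMod.comp_hom, reassoc_of% (hF'.fac F hF.unit), hF.fac])).trans
    (hF'.uniq F' hF'.unit (𝟙 F') (by simp)).symm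

lemma IsInjMonoX.of_iso {F F' : XMod X} (e : F ≅ F') (hF : IsInjMonoX F) : IsInjMonoX F' := by
  refine ⟨?_, fun A B f hA hB hf g => ?_⟩
  · have := hF.1
    have : IsIso e.inv.hom := ⟨e.hom.hom, by simp, by simp⟩
    have : Mono (F'.str ≫ e.inv.hom) := by rw [e.inv.comm]; infer_instance
    exact mono_of_mono _ e.inv.hom
  · obtain ⟨h, hh⟩ := hF.2 A B f hA hB hf (g ≫ e.inv)
    exact ⟨h ≫ e.hom, by rw [reassoc_of% hh, e.inv_hom_id, Category.comp_id]⟩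

namespace FreeModel

section

variable (X) (J : C)

-- `obj X J m = J ⊞ X (J ⊞ X (⋯ J))` has summands `X^i J` (`i ≤ m`) with projections `proj` and
-- inclusions `incl`; `str` maps the summand `X (X^i J)` of `X (obj X J m)` onto `X^(i+1) J` and
-- kills `X (X^m J)`, via the truncation `trunc` that forgets the last summand.
@[reducible] noncomputable def obj : ℕ → C
  | 0 => J
  | m + 1 => J ⊞ X.obj (obj m)

noncomputable def trunc : ∀ m, obj X J (m + 1) ⟶ obj X J m
  | 0 => biprod.fst
  | m + 1 => biprod.map (𝟙 J) (X.map (trunc m))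

noncomputable def str : ∀ m, X.obj (obj X J m) ⟶ obj X J m
  | 0 => 0
  | m + 1 => X.map (trunc X J m) ≫ biprod.inr

noncomputable def proj : ∀ m i, obj X J m ⟶ (fpow X i).obj J
  | 0, 0 => 𝟙 J
  | 0, _ + 1 => 0
  | _ + 1, 0 => biprod.fst
  | m + 1, i + 1 => biprod.snd ≫ X.map (proj m i)

noncomputable def incl : ∀ m i, (fpow X i).obj J ⟶ obj X J m
  | 0, 0 => 𝟙 J
  | 0, _ + 1 => 0
  | _ + 1, 0 => biprod.inl
  | m + 1, i + 1 => X.map (incl m i) ≫ biprod.inr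

lemma incl_proj_self : ∀ m i, i ≤ m → incl X J m i ≫ proj X J m i = 𝟙 _
  | 0, 0, _ => by simp [proj, incl]
  | m + 1, 0, _ => by simp [proj, incl]
  | m + 1, i + 1, h => by
    simp [proj, incl, ← X.map_comp, incl_proj_self m i (by omega)]

lemma incl_trunc : ∀ m i, i ≤ m → incl X J (m + 1) i ≫ trunc X J m = incl X J m i
  | 0, 0, _ => by simp [incl, trunc]
  | m + 1, 0, _ => by simp [incl, trunc]
  | m + 1, i + 1, h => by simp [incl, trunc, ← X.map_comp_assoc, incl_trunc m i (by omega)]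

lemma trunc_proj : ∀ m i, i ≤ m → trunc X J m ≫ proj X J m i = proj X J (m + 1) i
  | 0, 0, _ => by simp [proj, trunc]
  | m + 1, 0, _ => by simp [proj, trunc]
  | m + 1, i + 1, h => by simp [proj, trunc, ← X.map_comp, trunc_proj m i (by omega)]

lemma str_proj_zero : ∀ m, str X J m ≫ proj X J m 0 = 0
  | 0 => zero_comp
  | m + 1 => by simp [proj, str]

lemma map_incl_str : ∀ m i, i < m → X.map (incl X J m i) ≫ str X J m = incl X J m (i + 1)
  | m + 1, i, h => by simp [incl, str, ← X.map_comp_assoc, incl_trunc X J m i (by omega)]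

lemma str_proj_succ : ∀ m i, i < m → str X J m ≫ proj X J m (i + 1) = X.map (proj X J m i)
  | m + 1, i, h => by simp [proj, str, ← X.map_comp, trunc_proj X J m i (by omega)]

variable [X.Additive]

lemma incl_proj_of_ne : ∀ m i j, i ≠ j → incl X J m i ≫ proj X J m j = 0
  | 0, 0, 0, h => absurd rfl h
  | 0, 0, _ + 1, _ => by simp [proj, incl]
  | 0, _ + 1, _, _ => by simp [incl]
  | _ + 1, 0, 0, h => absurd rfl h
  | _ + 1, 0, _ + 1, _ => by simp [proj, incl]
  | _ + 1, _ + 1, 0, _ => by simp [proj, incl]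
  | m + 1, i + 1, j + 1, h => by
    simp [proj, incl, ← X.map_comp, incl_proj_of_ne m i j (by omega)]

lemma sum_proj_incl : ∀ m, ∑ i ∈ Finset.range (m + 1), proj X J m i ≫ incl X J m i = 𝟙 _
  | 0 => by simp [proj, incl]
  | m + 1 => by
    rw [Finset.sum_range_succ']
    apply biprod.hom_ext'
    · simp [Preadditive.comp_sum, proj, incl]
    · simp only [Preadditive.comp_add, Preadditive.comp_sum, proj, incl, Category.assoc,
        biprod.inr_snd_assoc, biprod.inr_fst_assoc, zero_comp, add_zero]
      simp only [← Category.assoc, ← X.map_comp]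
      rw [← Preadditive.sum_comp, ← X.map_sum, sum_proj_incl m, X.map_id, Category.id_comp,
        Category.comp_id]

lemma proj_eq_zero_of_lt : ∀ m i, m < i → proj X J m i = 0
  | 0, _ + 1, _ => rfl
  | m + 1, i + 1, h => by simp [proj, proj_eq_zero_of_lt m i (by omega)]

end

variable {J : C} {n : ℕ}

variable (n) in
noncomputable def lift {T : C} (h : ∀ i, T ⟶ (fpow X i).obj J) : T ⟶ obj X J n :=
  ∑ i ∈ Finset.range (n + 1), h i ≫ incl X J n i

lemma comp_lift {S T : C} (f : S ⟶ T) (h : ∀ i, T ⟶ (fpow X i).obj J) :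
    f ≫ lift n h = lift n fun i => f ≫ h i := by
  simp only [lift, Preadditive.comp_sum, Category.assoc]

variable [X.Additive]

lemma hom_ext {T : C} {f g : T ⟶ obj X J n}
    (h : ∀ i ≤ n, f ≫ proj X J n i = g ≫ proj X J n i) : f = g := by
  rw [← Category.comp_id f, ← Category.comp_id g, ← sum_proj_incl, Preadditive.comp_sum,
    Preadditive.comp_sum]
  refine Finset.sum_congr rfl fun i hi => ?_
  rw [← Category.assoc, ← Category.assoc, h i (Nat.lt_succ_iff.mp (Finset.mem_range.mp hi))]

lemma hom_ext' {T : C} {f g : obj X J n ⟶ T}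
    (h : ∀ i ≤ n, incl X J n i ≫ f = incl X J n i ≫ g) : f = g := by
  rw [← Category.id_comp f, ← Category.id_comp g, ← sum_proj_incl, Preadditive.sum_comp,
    Preadditive.sum_comp]
  refine Finset.sum_congr rfl fun i hi => ?_
  rw [Category.assoc, Category.assoc, h i (Nat.lt_succ_iff.mp (Finset.mem_range.mp hi))]

lemma map_hom_ext (hz : IsZero ((fpow X n).obj J)) {T : C} {f g : T ⟶ X.obj (obj X J n)}
    (h : ∀ i < n, f ≫ X.map (proj X J n i) = g ≫ X.map (proj X J n i)) : f = g := by
  rw [← Category.comp_id f, ← Category.comp_id g, ← X.map_id, ← sum_proj_incl, X.map_sum,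
    Preadditive.comp_sum, Preadditive.comp_sum, Finset.sum_range_succ, Finset.sum_range_succ]
  congr 1
  · refine Finset.sum_congr rfl fun i hi => ?_
    rw [X.map_comp, ← Category.assoc, ← Category.assoc, h i (Finset.mem_range.mp hi)]
  · simp [(X.map_isZero hz).eq_of_tgt (X.map (proj X J n n)) 0]

lemma map_hom_ext' (hz : IsZero ((fpow X n).obj J)) {T : C} {f g : X.obj (obj X J n) ⟶ T}
    (h : ∀ i < n, X.map (incl X J n i) ≫ f = X.map (incl X J n i) ≫ g) : f = g := by
  rw [← Category.id_comp f, ← Category.id_comp g, ← X.map_id, ← sum_proj_incl, X.map_sum,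
    Preadditive.sum_comp, Preadditive.sum_comp, Finset.sum_range_succ, Finset.sum_range_succ]
  congr 1
  · refine Finset.sum_congr rfl fun i hi => ?_
    rw [X.map_comp, Category.assoc, Category.assoc, h i (Finset.mem_range.mp hi)]
  · simp [(X.map_isZero hz).eq_of_src (X.map (incl X J n n)) 0]

lemma mono_str (hz : IsZero ((fpow X n).obj J)) : Mono (str X J n) :=
  Preadditive.mono_of_cancel_zero _ fun g hg => map_hom_ext hz fun i hi => by
    rw [← str_proj_succ X J n i hi, reassoc_of% hg, zero_comp, zero_comp]

noncomputable def desc {T : C} (c : ∀ i, (fpow X i).obj J ⟶ T) : obj X J n ⟶ T :=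
  ∑ i ∈ Finset.range (n + 1), proj X J n i ≫ c i

lemma incl_desc {T : C} (c : ∀ i, (fpow X i).obj J ⟶ T) {i : ℕ} (hi : i ≤ n) :
    incl X J n i ≫ desc c = c i := by
  rw [desc, Preadditive.comp_sum, Finset.sum_eq_single i]
  · rw [← Category.assoc, incl_proj_self X J n i hi, Category.id_comp]
  · intro j _ hj
    rw [← Category.assoc, incl_proj_of_ne X J n i j (Ne.symm hj), zero_comp]
  · exact fun hi' => absurd (Finset.mem_range.mpr (Nat.lt_succ_of_le hi)) hi'

lemma str_desc (hz : IsZero ((fpow X n).obj J)) (P : XMod X) (c : ∀ i, (fpow X i).obj J ⟶ P.carrier)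
    (hc : ∀ i, X.map (c i) ≫ P.str = c (i + 1)) :
    str X J n ≫ desc c = X.map (desc c) ≫ P.str :=
  map_hom_ext' hz fun i hi => by
    rw [reassoc_of% map_incl_str X J n i hi, incl_desc c hi, ← X.map_comp_assoc,
      incl_desc c hi.le, hc]

lemma proj_eq_zero_of_le (hz : IsZero ((fpow X n).obj J)) {i : ℕ} (hi : n ≤ i) :
    proj X J n i = 0 := by
  obtain rfl | hi := hi.eq_or_lt
  · exact hz.eq_of_tgt _ _
  · exact proj_eq_zero_of_lt X J n i hi

lemma lift_proj {T : C} (h : ∀ i, T ⟶ (fpow X i).obj J) {i : ℕ} (hi : i ≤ n) :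
    lift n h ≫ proj X J n i = h i := by
  rw [lift, Preadditive.sum_comp, Finset.sum_eq_single i]
  · rw [Category.assoc, incl_proj_self X J n i hi, Category.comp_id]
  · intro j _ hj
    rw [Category.assoc, incl_proj_of_ne X J n j i hj, comp_zero]
  · exact fun hi' => absurd (Finset.mem_range.mpr (Nat.lt_succ_of_le hi)) hi'

lemma lift_comp_proj {T : C} (f : T ⟶ obj X J n) : lift n (fun i => f ≫ proj X J n i) = f :=
  hom_ext fun _ hi => lift_proj _ hi

end FreeModel

variable (X) in
noncomputable abbrev freeModel (J : C) (n : ℕ) : XMod X :=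
  ⟨FreeModel.obj X J n, FreeModel.str X J n⟩

-- When `X^n J = 0`, these are exactly the families `g.hom ≫ proj X J n i` for module maps
-- `g : B ⟶ freeModel X J n`.
structure IsCompatibleFamily {J : C} {B : XMod X} (h : ∀ i, B.carrier ⟶ (fpow X i).obj J) :
    Prop where
  str_comp_zero : B.str ≫ h 0 = 0
  str_comp_succ : ∀ i, B.str ≫ h (i + 1) = X.map (h i)

namespace FreeModel

variable {J : C} {n : ℕ}

lemma incl_comp_hom {P : XMod X} (k : freeModel X J n ⟶ P) :
    ∀ i ≤ n, incl X J n i ≫ k.hom = (fpow X i).map (incl X J n 0 ≫ k.hom) ≫ P.act i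
  | 0, _ => by simp
  | i + 1, hi => by
    rw [← map_incl_str X J n i hi, Category.assoc, k.comm, ← X.map_comp_assoc,
      incl_comp_hom k i (by omega), X.map_comp_assoc]
    rfl

variable [X.Additive]

variable (X J) in
noncomputable def isFreeXModOn (hz : IsZero ((fpow X n).obj J)) :
    IsFreeXModOn X (freeModel X J n) J where
  unit := incl X J n 0
  lift P g := ⟨desc fun i => (fpow X i).map g ≫ P.act i, str_desc hz P _ fun i => by simp⟩
  fac P g := by simp [incl_desc]
  uniq P g k hk := XModHom.ext <| hom_ext' fun i hi => by
    rw [incl_comp_hom k i hi, hk, incl_desc _ hi]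

variable (X J n) in
noncomputable def topIso : (XMod.top X).obj (freeModel X J n) ≅ J where
  hom := cokernel.desc _ (proj X J n 0) (str_proj_zero X J n)
  inv := incl X J n 0 ≫ cokernel.π _
  hom_inv_id := by
    refine coequalizer.hom_ext (hom_ext' fun i hi => ?_)
    rcases i with _ | i
    · simp [← Category.assoc, incl_proj_self]
    · rw [cokernel.π_desc_assoc, ← Category.assoc, incl_proj_of_ne X J n _ _ (by omega),
        zero_comp, Category.comp_id, ← map_incl_str X J n i hi, Category.assoc,
        cokernel.condition, comp_zero]
  inv_hom_id := by simp [incl_proj_self]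

@[simp]
lemma π_topIso_hom : cokernel.π _ ≫ (topIso X J n).hom = proj X J n 0 :=
  cokernel.π_desc _ _ _

noncomputable def liftHom {B : XMod X} {h : ∀ i, B.carrier ⟶ (fpow X i).obj J}
    (hh : IsCompatibleFamily h) : B ⟶ freeModel X J n :=
  ⟨lift n h, hom_ext fun i hi => by
    rcases i with _ | i
    · rw [Category.assoc, lift_proj h hi, hh.str_comp_zero, Category.assoc, str_proj_zero,
        comp_zero]
    · rw [Category.assoc, lift_proj h hi, hh.str_comp_succ, Category.assoc,
        str_proj_succ X J n i hi, ← X.map_comp, lift_proj h (by omega)]⟩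

lemma isCompatibleFamily_comp_proj (hz : IsZero ((fpow X n).obj J)) {B : XMod X}
    (g : B ⟶ freeModel X J n) : IsCompatibleFamily fun i => g.hom ≫ proj X J n i where
  str_comp_zero := by rw [reassoc_of% g.comm, str_proj_zero, comp_zero]
  str_comp_succ i := by
    rcases lt_or_ge i n with hi | hi
    · rw [reassoc_of% g.comm, str_proj_succ X J n i hi, X.map_comp]
    · simp [proj_eq_zero_of_le hz hi, proj_eq_zero_of_le hz (Nat.le_succ_of_le hi)]

end FreeModel

section Extension

variable [PreservesFiniteLimits X] [PreservesFiniteColimits X]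

-- Extend `q₁` along `f` arbitrarily; the defect with `q₂` vanishes on `X A`, so it descends to
-- `X D` and extends along the monomorphism `D.str`; that extension corrects the first choice.
lemma IsConf.exists_extension {A B D : XMod X} {f : A ⟶ B} {p : B ⟶ D} (hc : IsConf f p)
    [Mono D.str] {Q : C} [Injective Q] (q₁ : A.carrier ⟶ Q) (q₂ : X.obj B.carrier ⟶ Q)
    (hq : A.str ≫ q₁ = X.map f.hom ≫ q₂) :
    ∃ h : B.carrier ⟶ Q, f.hom ≫ h = q₁ ∧ B.str ≫ h = q₂ := by
  obtain ⟨hf, hp, w, hexact⟩ := hc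
  have hexactX := hexact.map X
  have : Epi (X.map p.hom) := X.map_epi _
  have : Epi ((ShortComplex.mk f.hom p.hom w).map X).g := this
  set h₀ := Injective.factorThru q₁ f.hom
  have hfh₀ : f.hom ≫ h₀ = q₁ := Injective.comp_factorThru _ _
  have defect : X.map f.hom ≫ (B.str ≫ h₀ - q₂) = 0 := by
    rw [Preadditive.comp_sub, ← reassoc_of% f.comm, hfh₀, hq, sub_self]
  let e : X.obj D.carrier ⟶ Q := hexactX.desc _ defect
  have he : X.map p.hom ≫ e = B.str ≫ h₀ - q₂ := hexactX.g_desc _ _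
  set c := Injective.factorThru e D.str
  have hc : D.str ≫ c = e := Injective.comp_factorThru _ _
  refine ⟨h₀ - p.hom ≫ c, ?_, ?_⟩
  · rw [Preadditive.comp_sub, hfh₀, reassoc_of% w, zero_comp, sub_zero]
  · rw [Preadditive.comp_sub, reassoc_of% p.comm, hc, he]
    abel

lemma IsCompatibleFamily.exists_extension {J : C} {A B D : XMod X} {f : A ⟶ B} {p : B ⟶ D}
    (hc : IsConf f p) [Mono D.str] (hJ : ∀ i, Injective ((fpow X i).obj J))
    {g : ∀ i, A.carrier ⟶ (fpow X i).obj J} (hg : IsCompatibleFamily g) :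
    ∃ h : ∀ i, B.carrier ⟶ (fpow X i).obj J, IsCompatibleFamily h ∧ ∀ i, f.hom ≫ h i = g i := by
  have := hJ 0
  obtain ⟨h₀, hfh₀, hstrh₀⟩ := hc.exists_extension (g 0) 0 (by rw [hg.str_comp_zero, comp_zero])
  have step (i : ℕ) (prev : {h : B.carrier ⟶ (fpow X i).obj J // f.hom ≫ h = g i}) :
      ∃ next, f.hom ≫ next = g (i + 1) ∧ B.str ≫ next = X.map prev.1 :=
    have := hJ (i + 1)
    hc.exists_extension _ _ (by rw [hg.str_comp_succ, ← X.map_comp, prev.2])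
  choose next hnext_f hnext_str using step
  let h (i : ℕ) : {h : B.carrier ⟶ (fpow X i).obj J // f.hom ≫ h = g i} :=
    Nat.rec ⟨h₀, hfh₀⟩ (fun i prev => ⟨next i prev, hnext_f i prev⟩) i
  exact ⟨fun i => (h i).1, ⟨hstrh₀, fun i => hnext_str i (h i)⟩, fun i => (h i).2⟩

end Extension

lemma exists_isCompatibleFamily {J : C} (hJ : ∀ i, Injective ((fpow X i).obj J)) (M : XMod X)
    [Mono M.str] (φ : M.carrier ⟶ J) (hφ : M.str ≫ φ = 0) :
    ∃ h : ∀ i, M.carrier ⟶ (fpow X i).obj J, IsCompatibleFamily h ∧ h 0 = φ := by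
  choose next hnext using fun i (prev : M.carrier ⟶ (fpow X i).obj J) =>
    (hJ (i + 1)).factors (X.map prev) M.str
  exact ⟨fun i => Nat.rec φ next i, ⟨hφ, fun i => hnext i _⟩, rfl⟩

lemma exists_hom_freeModel [X.Additive] {J : C} (hJ : ∀ i, Injective ((fpow X i).obj J))
    (M : XMod X) [Mono M.str] (e : cokernel M.str ⟶ J) (n : ℕ) :
    ∃ a : M ⟶ freeModel X J n, (XMod.top X).map a ≫ (FreeModel.topIso X J n).hom = e := by
  obtain ⟨h, hh, h_zero⟩ := exists_isCompatibleFamily hJ M (cokernel.π M.str ≫ e)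
    (by rw [cokernel.condition_assoc, zero_comp])
  refine ⟨FreeModel.liftHom hh, coequalizer.hom_ext ?_⟩
  rw [← Category.assoc, XMod.π_top_map, Category.assoc, FreeModel.π_topIso_hom]
  exact (FreeModel.lift_proj h (Nat.zero_le n)).trans h_zero

attribute [local instance] Functor.additive_of_preserves_binary_products

section Injectives

variable [PreservesFiniteLimits X] [PreservesFiniteColimits X]

lemma isInjMonoX_freeModel {J : C} (hJ : ∀ i, Injective ((fpow X i).obj J)) {n : ℕ}
    (hz : IsZero ((fpow X n).obj J)) : IsInjMonoX (freeModel X J n) := by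
  refine ⟨FreeModel.mono_str hz, fun A B f _ _ ⟨D, p, _, hc⟩ g => ?_⟩
  obtain ⟨h, hh, hfh⟩ := (FreeModel.isCompatibleFamily_comp_proj hz g).exists_extension hc hJ
  refine ⟨FreeModel.liftHom hh, XModHom.ext ?_⟩
  change f.hom ≫ FreeModel.lift n h = g.hom
  simp only [FreeModel.comp_lift, hfh, FreeModel.lift_comp_proj]

lemma exists_inflation_freeModel [EnoughInjectives C] (hX : LocallyNilpotent X)
    (hXinj : ∀ I : C, Injective I → Injective (X.obj I)) (M : XMod X) [Mono M.str] :
    ∃ (J : C) (n : ℕ), Injective J ∧ IsZero ((fpow X n).obj J) ∧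
      ∃ a : M ⟶ freeModel X J n, IsInflationMono a := by
  let J := Injective.under (cokernel M.str)
  obtain ⟨n, hz⟩ := hX J
  obtain ⟨a, ha⟩ := exists_hom_freeModel (injective_fpow_obj hXinj inferInstance) M
    (Injective.ι (cokernel M.str)) n
  have := FreeModel.mono_str hz
  have : Mono ((XMod.top X).map a) := mono_of_mono_fac ha
  exact ⟨J, n, inferInstance, hz, a, XMod.isInflationMono_of_mono_top_map hX a⟩

lemma injective_cokernel_str_of_isInjMonoX [EnoughInjectives C] (hX : LocallyNilpotent X)
    (hXinj : ∀ I : C, Injective I → Injective (X.obj I)) {M : XMod X} (hM : IsInjMonoX M) :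
    Injective (cokernel M.str) := by
  have := hM.1
  obtain ⟨J, n, hJ, hz, a, ha⟩ := exists_inflation_freeModel hX hXinj M
  obtain ⟨r, hr⟩ := hM.2 M _ a inferInstance (FreeModel.mono_str hz) ha (𝟙 M)
  have : Injective ((XMod.top X).obj (freeModel X J n)) :=
    Injective.of_iso (FreeModel.topIso X J n).symm hJ
  exact Retract.injective ⟨(XMod.top X).map a, (XMod.top X).map r, by
    rw [← (XMod.top X).map_comp, hr, (XMod.top X).map_id]⟩

lemma isFreeXModOn_cokernel_str (hX : LocallyNilpotent X)
    (hXinj : ∀ I : C, Injective I → Injective (X.obj I)) (M : XMod X) [Mono M.str]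
    [Injective (cokernel M.str)] : Nonempty (IsFreeXModOn X M (cokernel M.str)) := by
  obtain ⟨n, hz⟩ := hX (cokernel M.str)
  obtain ⟨a, ha⟩ := exists_hom_freeModel (injective_fpow_obj hXinj inferInstance) M
    (𝟙 _) n
  have := FreeModel.mono_str hz
  rw [Iso.comp_hom_eq_id] at ha
  have : IsIso ((XMod.top X).map a) := by rw [ha]; infer_instance
  have := XMod.mono_hom_of_mono_top_map hX a
  have := XMod.epi_hom_of_epi_top_map hX a
  have : IsIso a.hom := isIso_of_mono_of_epi _
  exact ⟨(FreeModel.isFreeXModOn X _ hz).ofIso (XMod.isoMk (asIso a.hom) a.comm).symm⟩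

end Injectives

/-- Let `C` be abelian with enough injectives and `X` exact, locally
nilpotent and preserving injectives. The injective objects of the exact category
`Mono(X)` are exactly the free modules `f₁(J)` on injective objects `J` of `C`, and
`Mono(X)` has enough injectives. -/
theorem injectives_of_monoX
    [EnoughInjectives C]
    [PreservesFiniteLimits X] [PreservesFiniteColimits X]
    (hX : LocallyNilpotent X)
    (hXinj : ∀ I : C, Injective I → Injective (X.obj I)) :
    (∀ M : XMod X, IsInjMonoX M → ∃ J : C, Injective J ∧ Nonempty (IsFreeXModOn X M J)) ∧
    (∀ (J : C), Injective J → ∀ F : XMod X, IsFreeXModOn X F J → IsInjMonoX F) ∧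
    (∀ M : XMod X, Mono M.str → ∃ (J : C) (F : XMod X) (f : M ⟶ F),
      Injective J ∧ Nonempty (IsFreeXModOn X F J) ∧ IsInflationMono f) := by
  refine ⟨fun M hM => ?_, fun J hJ F hF => ?_, fun M hM => ?_⟩
  · have := hM.1
    have := injective_cokernel_str_of_isInjMonoX hX hXinj hM
    exact ⟨_, this, isFreeXModOn_cokernel_str hX hXinj M⟩
  · obtain ⟨n, hz⟩ := hX J
    exact (isInjMonoX_freeModel (injective_fpow_obj hXinj hJ) hz).of_iso
      ((FreeModel.isFreeXModOn X J hz).iso hF)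
  · obtain ⟨J, n, hJ, hz, a, ha⟩ := exists_inflation_freeModel hX hXinj M
    exact ⟨J, _, a, hJ, ⟨FreeModel.isFreeXModOn X J hz⟩, ha⟩
end

section
/- Let $\mathcal{C}$ be an abelian category with enough injectives and $X$ an exact, locally nilpotent endofunctor preserving injectives. For every object $\mathsf{M} \in \mathcal{C}^{T(X)}$, the morphism $p_{\mathsf{M}}\colon \operatorname{Mo}\mathsf{M} \to \mathsf{M}$ obtained by pushing out the canonical sequence $0 \to f_!X(M) \to f_!(M) \to \mathsf{M} \to 0$ along $f_!(e)$, where $e\colon X(M) \to J$ restricts to a monomorphism $\ker h_{\mathsf{M}} \hookrightarrow J$ with $J$ injective, is a right $\operatorname{Mono}(X)$-approximation of $\mathsf{M}$: $\operatorname{Mo}\mathsf{M} \in \operatorname{Mono}(X)$ and every morphism from an object of $\operatorname{Mono}(X)$ to $\mathsf{M}$ factors through $p_{\mathsf{M}}$. In particular, $\operatorname{Mono}(X)$ is contravariantly finite in $\mathcal{C}^{T(X)}$. -/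
open CategoryTheory Limits

universe v u

variable {C : Type u} [Category.{v} C]

variable [Abelian C] {X : C ⥤ C} [X.Additive]

instance {M N : XMod X} : Zero (XModHom M N) := ⟨⟨0, by simp⟩⟩
instance {M N : XMod X} : Add (XModHom M N) :=
  ⟨fun f g => ⟨f.hom + g.hom, by
    simp [Preadditive.comp_add, Preadditive.add_comp, f.comm, g.comm]⟩⟩
instance {M N : XMod X} : Neg (XModHom M N) :=
  ⟨fun f => ⟨-f.hom, by simp [Preadditive.comp_neg, Preadditive.neg_comp, f.comm]⟩⟩

instance {M N : XMod X} : AddCommGroup (XModHom M N) where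
  add_assoc f g h := by apply XModHom.ext; exact add_assoc _ _ _
  zero_add f := by apply XModHom.ext; exact zero_add _
  add_zero f := by apply XModHom.ext; exact add_zero _
  add_comm f g := by apply XModHom.ext; exact add_comm _ _
  neg_add_cancel f := by apply XModHom.ext; exact neg_add_cancel _
  nsmul := nsmulRec
  zsmul := zsmulRec

instance : Preadditive (XMod X) where
  homGroup M N := inferInstanceAs (AddCommGroup (XModHom M N))
  add_comp M N P f g h := by apply XModHom.ext; exact Preadditive.add_comp _ _ _ _ _ _
  comp_add M N P f g h := by apply XModHom.ext; exact Preadditive.comp_add _ _ _ _ _ _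

@[simp] lemma XMod.zero_hom (M N : XMod X) : (0 : M ⟶ N).hom = 0 := rfl
@[simp] lemma XMod.add_hom {M N : XMod X} (f g : M ⟶ N) : (f + g).hom = f.hom + g.hom := rfl

/-!
Module maps out of the free module `f₁(M)` are determined by their restriction to `M`, which lets
one compute the pushout `Mo M` by hand: it is `f₁(J) ⊞ M` with the triangular structure map
`(f₁(J).str, e ≫ unit; 0, h_M)`. Since `f₁(J) ≅ J ⊞ X f₁(J)`, the structure map of `f₁(J)` is split
monic with cokernel `J`, and `e` is monic on `ker h_M`; together these make the structure map of
`Mo M` monic. A morphism `f : N ⟶ M` lifts to `Mo M` as soon as the obstruction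
`X(f) ≫ e ≫ unit : X(N) ⟶ f₁(J)` is a coboundary, which for `N.str` monic follows by induction
on the nilpotency degree of `f₁(J)`, because `J` and all `X^k(J)` are injective.
-/

section Category

variable {C : Type*} [Category C] {X : C ⥤ C}

lemma fpow_succ_obj' (n : ℕ) (A : C) :
    (fpow X (n + 1)).obj A = (fpow X n).obj (X.obj A) := by
  induction n with
  | zero => rfl
  | succ n ih => exact congrArg X.obj ih

lemma IsFreeXModOn.hom_ext {F P : XMod X} {N : C} (hF : IsFreeXModOn X F N) {f g : F ⟶ P}
    (h : hF.unit ≫ f.hom = hF.unit ≫ g.hom) : f = g :=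
  (hF.uniq P _ f h).trans (hF.uniq P _ g rfl).symm

lemma XMod.mono_str_of_isIso_hom {P Q : XMod X} (f : P ⟶ Q) [IsIso f.hom] [Mono P.str] :
    Mono Q.str := by
  have hQ : Q.str = inv (X.map f.hom) ≫ P.str ≫ f.hom := by
    rw [f.comm, IsIso.inv_hom_id_assoc]
  rw [hQ]
  infer_instance

/-- The inverse is the module map freely induced by `biprod.inl`, for the structure map
`X(Λ) ≫ biprod.inr` on `N ⊞ X(F)`. -/
lemma IsFreeXModOn.isIso_desc_unit_str [HasZeroMorphisms C] [HasBinaryBiproducts C]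
    {F : XMod X} {N : C} (hF : IsFreeXModOn X F N) : IsIso (biprod.desc hF.unit F.str) := by
  set Λ := biprod.desc hF.unit F.str
  let G : XMod X := ⟨N ⊞ X.obj F.carrier, X.map Λ ≫ biprod.inr⟩
  let φ : G ⟶ F := ⟨Λ, by simp [G, Λ]⟩
  let ψ : F ⟶ G := hF.lift G biprod.inl
  have hψ : hF.unit ≫ ψ.hom = biprod.inl := hF.fac G biprod.inl
  have hψφ : ψ ≫ φ = 𝟙 F := hF.hom_ext (by simp [φ, reassoc_of% hψ, Λ])
  have hψΛ : ψ.hom ≫ Λ = 𝟙 F.carrier := congrArg XModHom.hom hψφ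
  refine ⟨ψ.hom, biprod.hom_ext' _ _ (by simp [Λ, hψ]) ?_, hψΛ⟩
  calc biprod.inr ≫ Λ ≫ ψ.hom = X.map (ψ.hom ≫ Λ) ≫ biprod.inr := by simp [Λ, ψ.comm, G]
    _ = biprod.inr ≫ 𝟙 _ := by simp [hψΛ]

end Category

section Preadditive

variable {C : Type*} [Category C] [Preadditive C] {X : C ⥤ C}

/-- Induction on `m`: the `π ≫ ι`-part of `γ` extends along the mono `N.str` into the injective
`A`, and the `σ ≫ κ`-part is handled by the induction hypothesis for `X(K)`. -/
theorem exists_str_comp_eq_of_isZero_fpow [X.Additive]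
    (hXinj : ∀ I : C, Injective I → Injective (X.obj I)) (m : ℕ) :
    ∀ {K A : C} (κ : X.obj K ⟶ K) (ι : A ⟶ K) (π : K ⟶ A) (σ : K ⟶ X.obj K), Injective A →
      π ≫ ι + σ ≫ κ = 𝟙 K → IsZero ((fpow X m).obj K) →
      ∀ (N : XMod X) [Mono N.str] (γ : X.obj N.carrier ⟶ K),
        ∃ u : N.carrier ⟶ K, N.str ≫ u = X.map u ≫ κ + γ := by
  induction m with
  | zero => exact fun _ _ _ _ _ _ hK _ _ _ => ⟨0, hK.eq_of_tgt _ _⟩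
  | succ m ih =>
    intro K A κ ι π σ hA hsplit hK N _ γ
    let a : N.carrier ⟶ A := Injective.factorThru (γ ≫ π) N.str
    have ha : N.str ≫ a = γ ≫ π := Injective.comp_factorThru _ _
    obtain ⟨v, hv⟩ := ih (X.map κ) (X.map ι) (X.map π) (X.map σ) (hXinj A hA)
      (by rw [← X.map_comp, ← X.map_comp, ← X.map_add, hsplit, X.map_id])
      (by rwa [← fpow_succ_obj']) N (X.map a ≫ X.map ι + γ ≫ σ)
    refine ⟨a ≫ ι + v ≫ κ, ?_⟩
    calc N.str ≫ (a ≫ ι + v ≫ κ) = γ ≫ π ≫ ι + (N.str ≫ v) ≫ κ := by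
          rw [Preadditive.comp_add, reassoc_of% ha, Category.assoc]
      _ = X.map (a ≫ ι + v ≫ κ) ≫ κ + γ ≫ (π ≫ ι + σ ≫ κ) := by
          rw [hv]
          simp only [Functor.map_add, Functor.map_comp, Preadditive.add_comp,
            Preadditive.comp_add, Category.assoc]
          abel
      _ = X.map (a ≫ ι + v ≫ κ) ≫ κ + γ := by rw [hsplit, Category.comp_id]

lemma eq_map_unit_comp_str_of_comm {M A FM FXM Mo : XMod X} {c : X.obj M.carrier ⟶ A.carrier}
    {hFM : IsFreeXModOn X FM M.carrier} {hFXM : IsFreeXModOn X FXM (X.obj M.carrier)}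
    {d : FXM ⟶ FM} {fe : FXM ⟶ A} {s : A ⟶ Mo} {r : FM ⟶ Mo}
    (hd : hFXM.unit ≫ d.hom = X.map hFM.unit ≫ FM.str - M.str ≫ hFM.unit)
    (hfe : hFXM.unit ≫ fe.hom = c) (hw : fe ≫ s = d ≫ r) :
    c ≫ s.hom + M.str ≫ hFM.unit ≫ r.hom = X.map (hFM.unit ≫ r.hom) ≫ Mo.str := by
  have hw' : fe.hom ≫ s.hom = d.hom ≫ r.hom := congrArg XModHom.hom hw
  rw [← hfe, Category.assoc, hw', ← Category.assoc, hd, X.map_comp, Category.assoc, ← r.comm]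
  simp

end Preadditive

section Biproducts

variable {C : Type*} [Category C] [Preadditive C] [HasBinaryBiproducts C] {X : C ⥤ C}

lemma IsFreeXModOn.exists_split {F : XMod X} {N : C} (hF : IsFreeXModOn X F N) :
    ∃ (π : F.carrier ⟶ N) (σ : F.carrier ⟶ X.obj F.carrier), F.str ≫ π = 0 ∧
      hF.unit ≫ π = 𝟙 N ∧ F.str ≫ σ = 𝟙 _ ∧ π ≫ hF.unit + σ ≫ F.str = 𝟙 F.carrier := by
  have := hF.isIso_desc_unit_str
  have hunit : hF.unit ≫ inv (biprod.desc hF.unit F.str) = biprod.inl := by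
    rw [IsIso.comp_inv_eq, biprod.inl_desc]
  have hstr : F.str ≫ inv (biprod.desc hF.unit F.str) = biprod.inr := by
    rw [IsIso.comp_inv_eq, biprod.inr_desc]
  refine ⟨inv (biprod.desc hF.unit F.str) ≫ biprod.fst,
    inv (biprod.desc hF.unit F.str) ≫ biprod.snd, ?_, ?_, ?_, ?_⟩
  · simp [reassoc_of% hstr]
  · simp [reassoc_of% hunit]
  · simp [reassoc_of% hstr]
  · simp only [Category.assoc, ← Preadditive.comp_add, ← biprod.desc_eq, IsIso.inv_hom_id]

lemma CategoryTheory.Functor.map_biprod_total {D : Type*} [Category D] [Preadditive D]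
    (F : C ⥤ D) [F.Additive] (A B : C) :
    F.map biprod.fst ≫ F.map biprod.inl + F.map biprod.snd ≫ F.map biprod.inr
      = 𝟙 (F.obj (A ⊞ B)) := by
  rw [← F.map_comp, ← F.map_comp, ← F.map_add, biprod.total, F.map_id]

lemma CategoryTheory.Functor.map_biprod_hom_ext {D : Type*} [Category D] [Preadditive D]
    (F : C ⥤ D) [F.Additive] {A B : C} {Y : D} {f g : F.obj (A ⊞ B) ⟶ Y}
    (hl : F.map biprod.inl ≫ f = F.map biprod.inl ≫ g)
    (hr : F.map biprod.inr ≫ f = F.map biprod.inr ≫ g) : f = g := by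
  rw [← Category.id_comp f, ← Category.id_comp g, ← F.map_biprod_total]
  simp only [Preadditive.add_comp, Category.assoc, hl, hr]

/-- The extension of `M` by `A` classified by `c`: the object `A ⊞ M` with the triangular
structure map `(A.str, c; 0, M.str)`. -/
noncomputable abbrev XMod.extension {A M : XMod X} (c : X.obj M.carrier ⟶ A.carrier) :
    XMod X where
  carrier := A.carrier ⊞ M.carrier
  str := biprod.lift (X.map biprod.fst ≫ A.str + X.map biprod.snd ≫ c)
    (X.map biprod.snd ≫ M.str)

namespace XMod.extension

variable {A M : XMod X} (c : X.obj M.carrier ⟶ A.carrier)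

@[simp]
lemma map_inl_str [X.Additive] :
    X.map biprod.inl ≫ (extension c).str = A.str ≫ biprod.inl := by
  apply biprod.hom_ext <;> simp [← Functor.map_comp_assoc]

@[simp]
lemma map_inr_str [X.Additive] :
    X.map biprod.inr ≫ (extension c).str = biprod.lift c M.str := by
  apply biprod.hom_ext <;> simp [← Functor.map_comp_assoc]

noncomputable def inl [X.Additive] : A ⟶ extension c :=
  ⟨biprod.inl, (map_inl_str c).symm⟩

noncomputable def snd : extension c ⟶ M :=
  ⟨biprod.snd, by simp⟩

noncomputable def lift {N : XMod X} (w : N.carrier ⟶ A.carrier) (f : N ⟶ M)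
    (hw : N.str ≫ w = X.map w ≫ A.str + X.map f.hom ≫ c) : N ⟶ extension c :=
  ⟨biprod.lift w f.hom, by
    apply biprod.hom_ext <;> simp [hw, f.comm, ← Functor.map_comp_assoc]⟩

noncomputable def desc [X.Additive] {Q : XMod X} (g : A ⟶ Q) (h : M.carrier ⟶ Q.carrier)
    (hw : c ≫ g.hom + M.str ≫ h = X.map h ≫ Q.str) : extension c ⟶ Q :=
  ⟨biprod.desc g.hom h, by
    apply Functor.map_biprod_hom_ext X
    · rw [← Category.assoc, map_inl_str, Category.assoc, biprod.inl_desc,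
        ← Functor.map_comp_assoc, biprod.inl_desc, g.comm]
    · rw [← Category.assoc, map_inr_str, biprod.lift_desc, ← Functor.map_comp_assoc,
        biprod.inr_desc, hw]⟩

@[simp]
lemma snd_hom : (snd c).hom = biprod.snd := rfl

@[simp]
lemma desc_hom [X.Additive] {Q : XMod X} (g : A ⟶ Q) (h : M.carrier ⟶ Q.carrier)
    (hw : c ≫ g.hom + M.str ≫ h = X.map h ≫ Q.str) : (desc c g h hw).hom = biprod.desc g.hom h :=
  rfl

@[simp]
lemma lift_snd {N : XMod X} (w : N.carrier ⟶ A.carrier) (f : N ⟶ M)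
    (hw : N.str ≫ w = X.map w ≫ A.str + X.map f.hom ≫ c) : lift c w f hw ≫ snd c = f :=
  XModHom.ext (biprod.lift_snd _ _)

end XMod.extension

/-- The pushout of `d` along `fe` is the extension classified by `c`; the inverse comes from the
pushout property, applied to `inl` and to the module map freely induced by `biprod.inr`. -/
lemma isIso_extension_desc_hom [X.Additive] {M A FM FXM Mo : XMod X}
    {c : X.obj M.carrier ⟶ A.carrier} {hFM : IsFreeXModOn X FM M.carrier}
    {hFXM : IsFreeXModOn X FXM (X.obj M.carrier)} {d : FXM ⟶ FM} {fe : FXM ⟶ A} {s : A ⟶ Mo}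
    {r : FM ⟶ Mo}
    (hd : hFXM.unit ≫ d.hom = X.map hFM.unit ≫ FM.str - M.str ≫ hFM.unit)
    (hfe : hFXM.unit ≫ fe.hom = c) (hpo : IsPushout fe d s r)
    (hw : c ≫ s.hom + M.str ≫ hFM.unit ≫ r.hom = X.map (hFM.unit ≫ r.hom) ≫ Mo.str) :
    IsIso (XMod.extension.desc c s (hFM.unit ≫ r.hom) hw).hom := by
  let ρ : FM ⟶ XMod.extension c := hFM.lift _ biprod.inr
  have hρ : hFM.unit ≫ ρ.hom = biprod.inr := hFM.fac _ _
  have hsq : fe ≫ XMod.extension.inl c = d ≫ ρ := hFXM.hom_ext <| by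
    change hFXM.unit ≫ fe.hom ≫ biprod.inl = hFXM.unit ≫ d.hom ≫ ρ.hom
    rw [reassoc_of% hfe, reassoc_of% hd, Preadditive.sub_comp, Category.assoc, ρ.comm,
      ← X.map_comp_assoc, hρ, XMod.extension.map_inr_str, Category.assoc, hρ, biprod.lift_eq,
      add_sub_cancel_right]
  let α : Mo ⟶ XMod.extension c := hpo.desc _ ρ hsq
  have hsα : s.hom ≫ α.hom = biprod.inl := congrArg XModHom.hom (hpo.inl_desc _ ρ hsq)
  have hrα : r.hom ≫ α.hom = ρ.hom := congrArg XModHom.hom (hpo.inr_desc _ ρ hsq)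
  have hαβ : α ≫ XMod.extension.desc c s (hFM.unit ≫ r.hom) hw = 𝟙 Mo := by
    apply hpo.hom_ext
    · exact XModHom.ext (by simp [reassoc_of% hsα])
    · exact hFM.hom_ext (by simp [reassoc_of% hrα, reassoc_of% hρ])
  refine ⟨α.hom, ?_, congrArg XModHom.hom hαβ⟩
  apply biprod.hom_ext' <;> simp [hsα, hrα, hρ]

end Biproducts

lemma XMod.mono_extension_str {A M : XMod X} {J : C} (c : X.obj M.carrier ⟶ A.carrier)
    [Mono A.str] (π : A.carrier ⟶ J) (hπ : A.str ≫ π = 0)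
    (hc : Mono (kernel.ι M.str ≫ c ≫ π)) : Mono (extension c).str := by
  rw [Preadditive.mono_iff_cancel_zero]
  intro Z g hg
  have h₁ : g ≫ X.map biprod.fst ≫ A.str + g ≫ X.map biprod.snd ≫ c = 0 := by
    simpa using hg =≫ biprod.fst
  have h₂ : (g ≫ X.map biprod.snd) ≫ M.str = 0 := by simpa using hg =≫ biprod.snd
  have hsnd : g ≫ X.map biprod.snd = 0 := by
    have hk : kernel.lift M.str _ h₂ ≫ kernel.ι M.str ≫ c ≫ π = 0 := by
      simpa [hπ] using h₁ =≫ π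
    rw [← kernel.lift_ι M.str _ h₂, (Preadditive.mono_iff_cancel_zero _).1 hc _ _ hk, zero_comp]
  have hfst : g ≫ X.map biprod.fst = 0 := by
    rw [← cancel_mono A.str]
    simpa [reassoc_of% hsnd] using h₁
  rw [← Category.comp_id g, ← X.map_biprod_total, Preadditive.comp_add, reassoc_of% hfst,
    reassoc_of% hsnd, zero_comp, zero_comp, add_zero]

theorem mo_is_right_monoX_approximation_general
    (hX : LocallyNilpotent X)
    (hXinj : ∀ I : C, Injective I → Injective (X.obj I))
    (M : XMod X) (J : C) (hJ : Injective J) (e : X.obj M.carrier ⟶ J)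
    (he : Mono (kernel.ι M.str ≫ e))
    (FM FXM FJ : XMod X)
    (hFM : IsFreeXModOn X FM M.carrier) (hFXM : IsFreeXModOn X FXM (X.obj M.carrier))
    (hFJ : IsFreeXModOn X FJ J)
    (d : FXM ⟶ FM) (hd : hFXM.unit ≫ d.hom = X.map hFM.unit ≫ FM.str - M.str ≫ hFM.unit)
    (fe : FXM ⟶ FJ) (hfe : hFXM.unit ≫ fe.hom = e ≫ hFJ.unit)
    (ε : FM ⟶ M) (hε : hFM.unit ≫ ε.hom = 𝟙 M.carrier)
    (Mo : XMod X) (s : FJ ⟶ Mo) (r : FM ⟶ Mo) (hpo : IsPushout fe d s r)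
    (p : Mo ⟶ M) (hp1 : r ≫ p = ε) (hp2 : s ≫ p = 0) :
    Mono Mo.str ∧
      ∀ (N : XMod X), Mono N.str → ∀ f : N ⟶ M, ∃ f' : N ⟶ Mo, f' ≫ p = f := by
  obtain ⟨π, σ, hstrπ, hunitπ, hstrσ, hsplit⟩ := hFJ.exists_split
  have hcompat := eq_map_unit_comp_str_of_comm hd hfe hpo.w
  let β := XMod.extension.desc _ s (hFM.unit ≫ r.hom) hcompat
  have : IsIso β.hom := isIso_extension_desc_hom hd hfe hpo hcompat
  have hβp : β ≫ p = XMod.extension.snd _ := XModHom.ext <| biprod.hom_ext' _ _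
    (by simpa [β] using congrArg XModHom.hom hp2)
    (by simp [β, ← hε, ← hp1])
  refine ⟨?_, fun N _ f => ?_⟩
  · have : Mono FJ.str := mono_of_mono_fac hstrσ
    have := XMod.mono_extension_str (e ≫ hFJ.unit) π hstrπ (by simpa [hunitπ] using he)
    exact XMod.mono_str_of_isIso_hom β
  · obtain ⟨m, hm⟩ := hX FJ.carrier
    obtain ⟨w, hcob⟩ := exists_str_comp_eq_of_isZero_fpow hXinj m FJ.str hFJ.unit π σ hJ hsplit
      hm N (X.map f.hom ≫ e ≫ hFJ.unit)
    exact ⟨XMod.extension.lift _ w f hcob ≫ β, by rw [Category.assoc, hβp, XMod.extension.lift_snd]⟩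

/-- Let `C` be abelian with enough injectives and `X` exact, locally
nilpotent and preserving injectives. For `M` in the Eilenberg–Moore category of the free
monad, choose an injective `J` and `e : X(M) ⟶ J` restricting to a monomorphism on
`ker h_M`, and form `Mo M` as the pushout of `0 ⟶ f₁X(M) ⟶ f₁(M) ⟶ M ⟶ 0` along
`f₁(e)`. Then the induced map `p : Mo M ⟶ M` is a right `Mono(X)`-approximation:
`Mo M ∈ Mono(X)` and every morphism from an object of `Mono(X)` to `M` factors through
`p`. In particular `Mono(X)` is contravariantly finite. -/
theorem mo_is_right_monoX_approximation
    [EnoughInjectives C]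
    [PreservesFiniteLimits X] [PreservesFiniteColimits X]
    (hX : LocallyNilpotent X)
    (hXinj : ∀ I : C, Injective I → Injective (X.obj I))
    (M : XMod X) (J : C) (hJ : Injective J) (e : X.obj M.carrier ⟶ J)
    (he : Mono (kernel.ι M.str ≫ e))
    (FM FXM FJ : XMod X)
    (hFM : IsFreeXModOn X FM M.carrier) (hFXM : IsFreeXModOn X FXM (X.obj M.carrier))
    (hFJ : IsFreeXModOn X FJ J)
    (d : FXM ⟶ FM) (hd : hFXM.unit ≫ d.hom = X.map hFM.unit ≫ FM.str - M.str ≫ hFM.unit)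
    (fe : FXM ⟶ FJ) (hfe : hFXM.unit ≫ fe.hom = e ≫ hFJ.unit)
    (ε : FM ⟶ M) (hε : hFM.unit ≫ ε.hom = 𝟙 M.carrier)
    (Mo : XMod X) (s : FJ ⟶ Mo) (r : FM ⟶ Mo) (hpo : IsPushout fe d s r)
    (p : Mo ⟶ M) (hp1 : r ≫ p = ε) (hp2 : s ≫ p = 0) :
    Mono Mo.str ∧
      ∀ (N : XMod X), Mono N.str → ∀ f : N ⟶ M, ∃ f' : N ⟶ Mo, f' ≫ p = f :=
  mo_is_right_monoX_approximation_general hX hXinj M J hJ e he FM FXM FJ hFM hFXM hFJ d hd fe hfe ε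
    hε Mo s r hpo p hp1 hp2
end
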